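/- Let M = [[A, B], [C, D]] ∈ ℂ^{2n×2n} where A, D, BC, CB ∈ ℂ^{n×n} are *-DMP. If AB = BD, DC = CA, B*A = DB*, and A^D B D^D C is nilpotent, then M is *-DMP. -/

import Mathlib

/-- Moore–Penrose inverse. -/
def IsMP {A : Type*} [Ring A] [StarRing A] (a x : A) : Prop :=
  a * x * a = a ∧ x * a * x = x ∧ star (a * x) = a * x ∧ star (x * a) = x * a

/-- Group inverse. -/
def IsGroupInv {A : Type*} [Ring A] (a x : A) : Prop :=
  a * x * a = a ∧ x * a * x = x ∧ a * x = x * a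

/-- `a` is *-DMP: some power `a ^ n` (`n ≥ 1`) has a common Moore–Penrose and group inverse. -/
def IsStarDMP {A : Type*} [Ring A] [StarRing A] (a : A) : Prop :=
  ∃ n : ℕ, 1 ≤ n ∧ ∃ x : A, IsMP (a ^ n) x ∧ IsGroupInv (a ^ n) x

/-- `x` is the Drazin inverse of `a` (with some index `k`). -/
def IsDrazin {A : Type*} [Ring A] (a x : A) : Prop :=
  ∃ k : ℕ, x * a ^ (k + 1) = a ^ k ∧ a * x ^ 2 = x ∧ a * x = x * a

/-- `x` is the pseudo core inverse of `a`. -/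
def IsPCore {A : Type*} [Ring A] [StarRing A] (a x : A) : Prop :=
  ∃ k : ℕ, x * a ^ (k + 1) = a ^ k ∧ a * x ^ 2 = x ∧ star (a * x) = a * x

/-- EP element: common group and Moore–Penrose inverse. -/
def IsEP {A : Type*} [Ring A] [StarRing A] (a : A) : Prop :=
  ∃ x : A, IsMP a x ∧ IsGroupInv a x
/-!
Write `M = N + P` with `N = diag(A, D)` and `P = [[0, B], [C, 0]]`. Then `AB = BD` and `DC = CA`
say that `N` and `P` commute, `P² = diag(BC, CB)`, and `(N^D P)² = diag(A^D B D^D C, D^D C A^D B)`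
is nilpotent. An element is *-DMP exactly when it has a Drazin inverse `x` with `a x`
self-adjoint.

`N`, `P`, `N^D` and `(P²)^D` commute pairwise, so in the commutative ring they generate, the
idempotents `e₁ = N N^D` and `e₂ = P² (P²)^D` split the unit into three pieces: on `e₁`,
`N + P = N (1 + N^D P)` is invertible; on `(1 - e₁) e₂`, `P` is invertible and `N` is nilpotent;
on `(1 - e₁)(1 - e₂)`, both are nilpotent. Hence `N + P` is Drazin invertible with
`(N + P)(N + P)^D = 1 - (1 - e₁)(1 - e₂)`, which is self-adjoint because `e₁` and `e₂` are
commuting self-adjoint idempotents.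
-/

theorem mul_pow_succ_eq_of_le {R : Type*} [Monoid R] {a x : R} {k j : ℕ}
    (h : x * a ^ (k + 1) = a ^ k) (hkj : k ≤ j) : x * a ^ (j + 1) = a ^ j := by
  obtain ⟨i, rfl⟩ := Nat.exists_eq_add_of_le hkj
  rw [add_right_comm, pow_add, ← mul_assoc, h, ← pow_add]

theorem isNilpotent_mul_comm {R : Type*} [MonoidWithZero R] {x y : R} :
    IsNilpotent (x * y) ↔ IsNilpotent (y * x) := by
  have key {x y : R} (h : IsNilpotent (x * y)) : IsNilpotent (y * x) := by
    obtain ⟨k, hk⟩ := h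
    exact ⟨k + 1, by rw [pow_succ', mul_assoc, ← mul_pow_mul, hk, zero_mul, mul_zero]⟩
  exact ⟨key, key⟩

section Ring

variable {R : Type*} [Ring R] {a b g s x y : R}

namespace IsDrazin

theorem commute (h : IsDrazin a x) : Commute a x := by
  obtain ⟨_, _, _, hc⟩ := h
  exact hc

theorem mul_sq (h : IsDrazin a x) : a * x ^ 2 = x := by
  obtain ⟨_, _, hx, _⟩ := h
  exact hx

theorem eventually_mul_pow_succ (h : IsDrazin a x) :
    ∀ᶠ k in Filter.atTop, x * a ^ (k + 1) = a ^ k := by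
  obtain ⟨k, hk, _, _⟩ := h
  exact Filter.eventually_atTop.2 ⟨k, fun _ => mul_pow_succ_eq_of_le hk⟩

theorem mul_mul_eq_self (h : IsDrazin a x) : x * a * x = x := by
  rw [← h.commute.eq, mul_assoc, ← sq, h.mul_sq]

theorem isIdempotentElem (h : IsDrazin a x) : IsIdempotentElem (a * x) := by
  rw [IsIdempotentElem, mul_assoc, ← mul_assoc x, h.mul_mul_eq_self]

theorem pow_mul_pow_succ (h : IsDrazin a x) : ∀ j : ℕ, a ^ j * x ^ (j + 1) = x
  | 0 => by simp
  | j + 1 => by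
    rw [pow_succ x, ← mul_assoc, ← h.commute.mul_pow, h.isIdempotentElem.pow_succ_eq, mul_assoc,
      ← sq, h.mul_sq]

theorem pow_succ_mul_pow (h : IsDrazin a x) (j : ℕ) : x ^ (j + 1) * a ^ j = x := by
  rw [← (h.commute.pow_pow j (j + 1)).eq, h.pow_mul_pow_succ]

theorem unique (hx : IsDrazin a x) (hy : IsDrazin a y) : x = y := by
  obtain ⟨k, hxk, hyk⟩ := (hx.eventually_mul_pow_succ.and hy.eventually_mul_pow_succ).exists
  have hx' : x = y * a * x := calc
    x = y * a ^ (k + 1) * x ^ (k + 1) := by rw [hyk, hx.pow_mul_pow_succ]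
    _ = y * a * x := by rw [pow_succ', mul_assoc y, mul_assoc a, hx.pow_mul_pow_succ, mul_assoc]
  have hy' : y = y * a * x := calc
    y = y ^ (k + 1) * (a ^ (k + 1) * x) := by
      rw [(hx.commute.pow_left _).eq, hxk, hy.pow_succ_mul_pow]
    _ = y * a * x := by simp only [pow_succ a, ← mul_assoc, hy.pow_succ_mul_pow]
  rw [hx', ← hy']

theorem commute_of_commute (h : IsDrazin a x) (hs : Commute s a) : Commute s x := by
  obtain ⟨k, hk⟩ := h.eventually_mul_pow_succ.exists
  have hk' : a ^ (k + 1) * x = a ^ k := by rw [(h.commute.pow_left _).eq, hk]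
  have hxs : x * s = x * a * s * x := calc
    x * s = x ^ (k + 1) * (s * (a ^ (k + 1) * x)) := by
      rw [hk', (hs.pow_right k).eq, ← mul_assoc, h.pow_succ_mul_pow]
    _ = x * a * s * x := by
      rw [← mul_assoc s, (hs.pow_right _).eq, pow_succ a]
      simp only [← mul_assoc, h.pow_succ_mul_pow]
  have hsx : s * x = x * s * a * x := calc
    s * x = x * a ^ (k + 1) * s * x ^ (k + 1) := by
      rw [hk, ← (hs.pow_right k).eq, mul_assoc, h.pow_mul_pow_succ]
    _ = x * s * a * x := by
      rw [mul_assoc x, ← (hs.pow_right _).eq, pow_succ' a]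
      simp only [mul_assoc, h.pow_mul_pow_succ]
  calc s * x = x * s * a * x := hsx
    _ = x * a * s * x := by rw [mul_assoc x s a, hs.eq, ← mul_assoc]
    _ = x * s := hxs.symm

theorem of_pow {j : ℕ} (h : IsDrazin (a ^ (j + 1)) g) : IsDrazin a (a ^ j * g) := by
  have hag : Commute a g := h.commute_of_commute (Commute.self_pow a _)
  obtain ⟨k, hk, hg, -⟩ := h
  refine ⟨(j + 1) * k, ?_, ?_, ((Commute.self_pow a j).mul_right hag).eq⟩
  · calc a ^ j * g * a ^ ((j + 1) * k + 1) = g * (a ^ (j + 1)) ^ (k + 1) := by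
          rw [(hag.pow_left j).eq, mul_assoc, ← pow_add, ← pow_mul,
            show j + ((j + 1) * k + 1) = (j + 1) * (k + 1) by ring]
      _ = a ^ ((j + 1) * k) := by rw [hk, pow_mul]
  · calc a * (a ^ j * g) ^ 2 = a ^ j * (a ^ (j + 1) * g ^ 2) := by
          rw [(hag.pow_left j).mul_pow, ← mul_assoc, ← mul_assoc, ← pow_mul, ← pow_succ',
            ← pow_add, show j * 2 + 1 = j + (j + 1) by ring]
      _ = a ^ j * g := by rw [hg]

end IsDrazin

theorem isDrazin_map_iff {S F : Type*} [Ring S] [FunLike F R S] [RingHomClass F R S] {f : F}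
    (hf : Function.Injective f) : IsDrazin (f a) (f x) ↔ IsDrazin a x := by
  simp only [IsDrazin, ← map_pow, ← map_mul, hf.eq_iff]

theorem IsGroupInv.isDrazin (h : IsGroupInv b g) : IsDrazin b g := by
  obtain ⟨hbgb, hgbg, hc⟩ := h
  refine ⟨1, ?_, ?_, hc⟩
  · rw [pow_succ, pow_one, ← mul_assoc, ← hc, hbgb]
  · rw [sq, ← mul_assoc, hc, hgbg]

end Ring

section CommRing

variable {R : Type*} [CommRing R] {a e m x y : R}

theorem IsDrazin.isNilpotent_mul_one_sub (h : IsDrazin a x) : IsNilpotent (a * (1 - a * x)) := by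
  obtain ⟨k, hk, -, -⟩ := h
  generalize ht : 1 - a * x = t
  exact ⟨k + 1, by linear_combination (-(a * t ^ k)) * hk - a * t ^ k * a ^ k * ht⟩

theorem IsDrazin.of_mul_eq_idempotent (he : IsIdempotentElem e) (hy : a * y = e) (hey : e * y = y)
    (hnil : IsNilpotent (a * (1 - e))) : IsDrazin a y := by
  obtain ⟨k, hk⟩ := hnil
  have hak : a ^ k * (1 - e) = 0 := by
    rw [← he.one_sub.pow_succ_eq k, pow_succ, ← mul_assoc, ← mul_pow, hk, zero_mul]
  refine ⟨k, ?_, ?_, mul_comm a y⟩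
  · linear_combination a ^ k * hy - hak
  · linear_combination y * hy + hey

/- `a * y = e ∧ e * y = y` says that `y` inverts `a` in the ring `e R`, whose identity is `e`. -/
theorem exists_mul_eq_of_mul_eq_add_isNilpotent (he : IsIdempotentElem e) (hey : e * y = y)
    (hm : IsNilpotent m) (hy : a * y = e + m) : ∃ y', a * y' = e ∧ e * y' = y' := by
  obtain ⟨v, hv⟩ := hm.isUnit_one_add.exists_left_inv
  have hem : e * m = m := by linear_combination a * hey - he.eq - (e - 1) * hy
  refine ⟨y * v, ?_, by rw [← mul_assoc, hey]⟩
  linear_combination v * hy - v * hem + e * hv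

theorem IsDrazin.exists_isDrazin_add {n p n' z : R} (hn : IsDrazin n n')
    (hz : IsDrazin (p * p) z) (hnil : IsNilpotent (n' * p)) :
    ∃ y, IsDrazin (n + p) y ∧ (n + p) * y = 1 - (1 - n * n') * (1 - p * p * z) := by
  have he₁ := hn.isIdempotentElem
  have he₂ := hz.isIdempotentElem
  have hf := he₁.one_sub.mul_of_commute (.all _ _) he₂
  obtain ⟨y₁, hy₁, hey₁⟩ := exists_mul_eq_of_mul_eq_add_isNilpotent he₁
    (by linear_combination hn.mul_sq) (mul_comm n' p ▸ hnil) (add_mul n p n')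
  -- `p z` inverts `p` on `p² z`, and `n` is nilpotent on `1 - n n'`
  obtain ⟨y₂, hy₂, hey₂⟩ := exists_mul_eq_of_mul_eq_add_isNilpotent hf (a := n + p)
    (y := p * z * ((1 - n * n') * (p * p * z))) (by linear_combination p * z * hf.eq)
    ((Commute.all _ _).isNilpotent_mul_right hn.isNilpotent_mul_one_sub
      (y := p * z * (p * p * z)))
    (by linear_combination (1 - n * n') * he₂.eq)
  have hy : (n + p) * (y₁ + y₂) = 1 - (1 - n * n') * (1 - p * p * z) := by
    linear_combination hy₁ + hy₂
  have hp_nil : IsNilpotent (p * (1 - p * p * z)) := by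
    refine .of_pow (m := 2) ?_
    convert hz.isNilpotent_mul_one_sub using 1
    linear_combination p ^ 2 * he₂.eq
  have he := (he₁.one_sub.mul_of_commute (.all _ _) he₂.one_sub).one_sub
  refine ⟨y₁ + y₂, .of_mul_eq_idempotent he hy ?_ ?_, hy⟩
  · linear_combination (1 - p * p * z) * y₁ * he₁.eq + (1 - n * n') * (1 - p * p * z) * hey₁
      + (1 - n * n') ^ 2 * y₂ * he₂.eq + (1 - n * n') * (1 - p * p * z) * hey₂
  · rw [show (n + p) * (1 - (1 - (1 - n * n') * (1 - p * p * z))) =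
      n * (1 - n * n') * (1 - p * p * z) + p * (1 - p * p * z) * (1 - n * n') by ring]
    exact (Commute.all _ _).isNilpotent_add
      ((Commute.all _ _).isNilpotent_mul_right hn.isNilpotent_mul_one_sub)
      ((Commute.all _ _).isNilpotent_mul_right hp_nil)

end CommRing

section StarRing

variable {R : Type*} [Ring R] [StarRing R] {a x : R}

theorem IsDrazin.isStarDMP (h : IsDrazin a x) (hs : IsSelfAdjoint (a * x)) : IsStarDMP a := by
  obtain ⟨k, hk⟩ := h.eventually_mul_pow_succ.exists
  have hbg : a ^ (k + 1) * x ^ (k + 1) = a * x := by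
    rw [← h.commute.mul_pow, h.isIdempotentElem.pow_succ_eq]
  have hgb : x ^ (k + 1) * a ^ (k + 1) = a * x := by rw [← (h.commute.pow_pow _ _).eq, hbg]
  have hbgb : a ^ (k + 1) * x ^ (k + 1) * a ^ (k + 1) = a ^ (k + 1) := by
    rw [hbg, mul_assoc, hk, ← pow_succ']
  have hgbg : x ^ (k + 1) * a ^ (k + 1) * x ^ (k + 1) = x ^ (k + 1) := by
    rw [hgb, pow_succ', ← mul_assoc, mul_assoc a, ← sq, h.mul_sq]
  refine ⟨k + 1, k.succ_pos, x ^ (k + 1), ⟨hbgb, hgbg, ?_, ?_⟩,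
    hbgb, hgbg, hbg.trans hgb.symm⟩
  · rw [hbg, hs.star_eq]
  · rw [hgb, hs.star_eq]

theorem isStarDMP_iff_exists_isDrazin :
    IsStarDMP a ↔ ∃ x, IsDrazin a x ∧ IsSelfAdjoint (a * x) := by
  refine ⟨?_, fun ⟨x, hx, hs⟩ => hx.isStarDMP hs⟩
  rintro ⟨_ | j, hj, g, hmp, hgi⟩
  · omega
  refine ⟨a ^ j * g, hgi.isDrazin.of_pow, ?_⟩
  rw [← mul_assoc, ← pow_succ']
  exact hmp.2.2.1

theorem IsStarDMP.isSelfAdjoint_mul (h : IsStarDMP a) (hx : IsDrazin a x) :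
    IsSelfAdjoint (a * x) := by
  obtain ⟨y, hy, hs⟩ := isStarDMP_iff_exists_isDrazin.1 h
  rwa [hx.unique hy]

open scoped IsMulCommutative in
theorem IsStarDMP.add_of_commute {n p n' : R} (hn : IsStarDMP n) (hn' : IsDrazin n n')
    (hp : IsStarDMP (p * p)) (hnp : Commute n p) (hnil : IsNilpotent (n' * p)) :
    IsStarDMP (n + p) := by
  obtain ⟨z, hz, hz_sa⟩ := isStarDMP_iff_exists_isDrazin.1 hp
  have hpn' : Commute p n' := hn'.commute_of_commute hnp.symm
  have hnz : Commute n z := hz.commute_of_commute (hnp.mul_right hnp)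
  have hpz : Commute p z := hz.commute_of_commute ((Commute.refl p).mul_right (.refl p))
  have hn'z : Commute n' z := hz.commute_of_commute (hpn'.symm.mul_right hpn'.symm)
  have hnn' : Commute n n' := hn'.commute
  let S := Subring.closure {n, p, n', z}
  have : IsMulCommutative S := Subring.isMulCommutative_closure <| by
    simp only [Set.mem_insert_iff, Set.mem_singleton_iff]
    rintro x (hx | hx | hx | hx) y (hy | hy | hy | hy) <;> rw [hx, hy] <;>
      first | rfl | assumption | exact Commute.symm (by assumption)
  have mem {r : R} (hr : r ∈ ({n, p, n', z} : Set R)) : r ∈ S := Subring.subset_closure hr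
  let N : S := ⟨n, mem (by simp)⟩
  let P : S := ⟨p, mem (by simp)⟩
  let N' : S := ⟨n', mem (by simp)⟩
  let Z : S := ⟨z, mem (by simp)⟩
  have hι := S.subtype_injective
  obtain ⟨y, hy, hye⟩ := IsDrazin.exists_isDrazin_add
    ((isDrazin_map_iff (a := N) (x := N') hι).1 hn')
    ((isDrazin_map_iff (a := P * P) (x := Z) hι).1 hz)
    ((IsNilpotent.map_iff (r := N' * P) hι).1 hnil)
  have hcomm : Commute (1 - n * n') (1 - p * p * z) :=
    (Commute.all (1 - N * N') (1 - P * P * Z)).map S.subtype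
  refine ((isDrazin_map_iff (a := N + P) (x := y) hι).2 hy).isStarDMP ?_
  rw [← map_mul, hye]
  have hsa₁ := (IsSelfAdjoint.one R).sub (hn.isSelfAdjoint_mul hn')
  have hsa₂ := (IsSelfAdjoint.one R).sub hz_sa
  exact (IsSelfAdjoint.one R).sub ((hsa₁.commute_iff hsa₂).1 hcomm)

end StarRing

section Blocks

open Matrix

variable {m n α : Type*} [Fintype m] [Fintype n] [DecidableEq m] [DecidableEq n] [Ring α]
  {X X' : Matrix m m α} {Y Y' : Matrix n n α}

theorem IsNilpotent.fromBlocks (hX : IsNilpotent X) (hY : IsNilpotent Y) :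
    IsNilpotent (fromBlocks X 0 0 Y) := by
  obtain ⟨i, hi⟩ := hX
  obtain ⟨j, hj⟩ := hY
  refine ⟨max i j, ?_⟩
  rw [fromBlocks_diagonal_pow, pow_eq_zero_of_le (le_max_left i j) hi,
    pow_eq_zero_of_le (le_max_right i j) hj, fromBlocks_zero]

theorem IsDrazin.fromBlocks (hX : IsDrazin X X') (hY : IsDrazin Y Y') :
    IsDrazin (fromBlocks X 0 0 Y) (fromBlocks X' 0 0 Y') := by
  obtain ⟨k, hXk, hYk⟩ := (hX.eventually_mul_pow_succ.and hY.eventually_mul_pow_succ).exists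
  refine ⟨k, ?_, ?_, ?_⟩
  · simp [fromBlocks_diagonal_pow, fromBlocks_multiply, hXk, hYk]
  · simp [fromBlocks_diagonal_pow, fromBlocks_multiply, hX.mul_sq, hY.mul_sq]
  · simp [fromBlocks_multiply, hX.commute.eq, hY.commute.eq]

theorem IsStarDMP.fromBlocks [StarRing α] (hX : IsStarDMP X) (hY : IsStarDMP Y) :
    IsStarDMP (fromBlocks X 0 0 Y) := by
  obtain ⟨X', hX', hXs⟩ := isStarDMP_iff_exists_isDrazin.1 hX
  obtain ⟨Y', hY', hYs⟩ := isStarDMP_iff_exists_isDrazin.1 hY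
  refine (hX'.fromBlocks hY').isStarDMP ?_
  simp only [fromBlocks_multiply, Matrix.mul_zero, Matrix.zero_mul, add_zero, zero_add]
  exact IsHermitian.fromBlocks hXs conjTranspose_zero hYs

end Blocks

variable {A : Type*} [NormedRing A] [StarRing A] [NormedAlgebra ℂ A] [CompleteSpace A]

theorem stmt14_general {n : ℕ} (A B C D AD DD : Matrix (Fin n) (Fin n) ℂ)
    (hA : IsStarDMP A) (hD : IsStarDMP D)
    (hBC : IsStarDMP (B * C)) (hCB : IsStarDMP (C * B))
    (hAD : IsDrazin A AD) (hDD : IsDrazin D DD)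
    (h1 : A * B = B * D) (h2 : D * C = C * A)
    (h5 : IsNilpotent (AD * B * (DD * C))) :
    IsStarDMP (Matrix.fromBlocks A B C D) := by
  have hsplit : Matrix.fromBlocks A B C D = .fromBlocks A 0 0 D + .fromBlocks 0 B C 0 := by
    simp [Matrix.fromBlocks_add]
  have hsq : Matrix.fromBlocks 0 B C 0 * .fromBlocks 0 B C 0 = .fromBlocks (B * C) 0 0 (C * B) := by
    simp [Matrix.fromBlocks_multiply]
  have hcomm : Commute (Matrix.fromBlocks A 0 0 D) (.fromBlocks 0 B C 0) := by
    simp [Commute, SemiconjBy, Matrix.fromBlocks_multiply, h1, h2]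
  have hnil : IsNilpotent (Matrix.fromBlocks AD 0 0 DD * .fromBlocks 0 B C 0) := by
    refine IsNilpotent.of_pow (m := 2) ?_
    rw [sq]
    simpa [Matrix.fromBlocks_multiply, mul_assoc] using h5.fromBlocks (isNilpotent_mul_comm.1 h5)
  rw [hsplit]
  exact (hA.fromBlocks hD).add_of_commute (hAD.fromBlocks hDD) (hsq ▸ hBC.fromBlocks hCB)
    hcomm hnil

theorem stmt14 {n : ℕ} (A B C D AD DD : Matrix (Fin n) (Fin n) ℂ)
    (hA : IsStarDMP A) (hD : IsStarDMP D)
    (hBC : IsStarDMP (B * C)) (hCB : IsStarDMP (C * B))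
    (hAD : IsDrazin A AD) (hDD : IsDrazin D DD)
    (h1 : A * B = B * D) (h2 : D * C = C * A)
    (h3 : star B * A = D * star B)
    (h5 : IsNilpotent (AD * B * (DD * C))) :
    IsStarDMP (Matrix.fromBlocks A B C D) :=
  stmt14_general A B C D AD DD hA hD hBC hCB hAD hDD h1 h2 h5
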